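/- arXiv:2605.14776 — 5 statements merged into one kernel-verified Lean document; each statement's English description precedes it below -/
import Mathlib

section
/- Let 0 ≤ λ < γ ≤ δ, p ≥ 1 real, and define k₁ : [0,1] → ℝ by k₁(r) = r + Σ_{m=2}^∞ c_m r^m + Σ_{m=2}^∞ (c_m)^p r^{pm} − 1 − Σ_{m=2}^∞ (−1)^{m−1} c_m, where c_m = 4(γ−λ)/(m^2(2γ+(δ−γ)(m−1))). Then k₁ is continuous on [0,1], strictly increasing on (0,1), satisfies k₁(0) < 0 and k₁(1) > 0, and hence has a unique root in (0,1). -/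
/-!
On `[0, 1]` both power series in `k₁` have nonnegative summable coefficients (`c_m ≤ 2 / m ^ 2`,
and `c_m ^ p ≤ c_m` because `c_m < 1`), so they are continuous by uniform convergence and
nondecreasing; the term `r` makes `k₁` strictly increasing. The coefficients decrease, so the
alternating series error bound gives `|∑ (-1) ^ m c_{m+2}| ≤ c_2 < 1`, whence `k₁ 0 < 0`, and at
`r = 1` the positive series strictly dominates the alternating one, whence `k₁ 1 > 0`.
-/

open Real Set

section SeriesOfFunctions

variable {α : Type*} {a : ℕ → ℝ} {g : ℕ → α → ℝ} {s : Set α}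

theorem continuousOn_tsum_mul [TopologicalSpace α] (ha : Summable a)
    (hg : ∀ m, ContinuousOn (g m) s) (hg1 : ∀ m, ∀ x ∈ s, ‖g m x‖ ≤ 1) :
    ContinuousOn (fun x => ∑' m, a m * g m x) s :=
  continuousOn_tsum (fun m => continuousOn_const.mul (hg m)) ha.norm fun m x hx => by
    rw [norm_mul]
    exact mul_le_of_le_one_right (norm_nonneg _) (hg1 m x hx)

theorem summable_mul_of_mapsTo_Icc (ha0 : ∀ m, 0 ≤ a m) (ha : Summable a)
    (hg : ∀ m, MapsTo (g m) s (Icc 0 1)) {x : α} (hx : x ∈ s) :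
    Summable fun m => a m * g m x :=
  ha.of_nonneg_of_le (fun m => mul_nonneg (ha0 m) (hg m hx).1)
    fun m => mul_le_of_le_one_right (ha0 m) (hg m hx).2

theorem monotoneOn_tsum_mul [Preorder α] (ha0 : ∀ m, 0 ≤ a m) (ha : Summable a)
    (hg : ∀ m, MonotoneOn (g m) s) (hg01 : ∀ m, MapsTo (g m) s (Icc 0 1)) :
    MonotoneOn (fun x => ∑' m, a m * g m x) s := fun _ hx _ hy hxy =>
  (summable_mul_of_mapsTo_Icc ha0 ha hg01 hx).tsum_le_tsum
    (fun m => mul_le_mul_of_nonneg_left (hg m hx hy hxy) (ha0 m))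
    (summable_mul_of_mapsTo_Icc ha0 ha hg01 hy)

theorem norm_le_one_of_mapsTo_Icc {f : α → ℝ} (hf : MapsTo f s (Icc 0 1)) :
    ∀ x ∈ s, ‖f x‖ ≤ 1 := fun _ hx => by
  rw [Real.norm_of_nonneg (hf hx).1]
  exact (hf hx).2

end SeriesOfFunctions

section PowerSeriesOnUnitInterval

variable {a : ℕ → ℝ}

theorem mapsTo_pow_Icc_zero_one (n : ℕ) : MapsTo (fun r : ℝ => r ^ n) (Icc 0 1) (Icc 0 1) :=
  fun _ hr => ⟨pow_nonneg hr.1 n, pow_le_one₀ hr.1 hr.2⟩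

theorem mapsTo_rpow_Icc_zero_one {q : ℝ} (hq : 0 ≤ q) :
    MapsTo (fun r : ℝ => r ^ q) (Icc 0 1) (Icc 0 1) :=
  fun _ hr => ⟨rpow_nonneg hr.1 q, rpow_le_one hr.1 hr.2 hq⟩

theorem continuousOn_tsum_mul_pow (ha : Summable a) (e : ℕ → ℕ) :
    ContinuousOn (fun r : ℝ => ∑' m, a m * r ^ e m) (Icc 0 1) :=
  continuousOn_tsum_mul ha (fun m => (continuous_pow (e m)).continuousOn)
    fun m => norm_le_one_of_mapsTo_Icc (mapsTo_pow_Icc_zero_one (e m))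

theorem monotoneOn_tsum_mul_pow (ha0 : ∀ m, 0 ≤ a m) (ha : Summable a) (e : ℕ → ℕ) :
    MonotoneOn (fun r : ℝ => ∑' m, a m * r ^ e m) (Icc 0 1) :=
  monotoneOn_tsum_mul ha0 ha (fun _ => pow_left_monotoneOn.mono fun _ hr => hr.1)
    fun m => mapsTo_pow_Icc_zero_one (e m)

theorem continuousOn_tsum_mul_rpow (ha : Summable a) {e : ℕ → ℝ} (he : ∀ m, 0 ≤ e m) :
    ContinuousOn (fun r : ℝ => ∑' m, a m * r ^ e m) (Icc 0 1) :=
  continuousOn_tsum_mul ha (fun m => (continuous_rpow_const (he m)).continuousOn)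
    fun m => norm_le_one_of_mapsTo_Icc (mapsTo_rpow_Icc_zero_one (he m))

theorem monotoneOn_tsum_mul_rpow (ha0 : ∀ m, 0 ≤ a m) (ha : Summable a) {e : ℕ → ℝ}
    (he : ∀ m, 0 ≤ e m) : MonotoneOn (fun r : ℝ => ∑' m, a m * r ^ e m) (Icc 0 1) :=
  monotoneOn_tsum_mul ha0 ha
    (fun m => (monotoneOn_rpow_Ici_of_exponent_nonneg (he m)).mono Icc_subset_Ici_self)
    fun m => mapsTo_rpow_Icc_zero_one (he m)

end PowerSeriesOnUnitInterval

section Alternating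

variable {f : ℕ → ℝ}

theorem neg_le_tsum_neg_one_pow_succ_mul (hfa : Antitone f) (hfs : Summable f) :
    -f 0 ≤ ∑' m, (-1) ^ (m + 1) * f m := by
  simp_rw [pow_succ, mul_neg_one, neg_mul, tsum_neg, neg_le_neg_iff]
  simpa using (abs_le.1 (alternating_series_error_bound f hfa hfs 0)).2

theorem tsum_neg_one_pow_succ_mul_lt_tsum (hfs : Summable f) (hf0 : ∀ m, 0 ≤ f m)
    (hpos : 0 < f 0) : ∑' m, (-1) ^ (m + 1) * f m < ∑' m, f m := by
  have hsum : Summable fun m => (-1) ^ (m + 1) * f m :=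
    hfs.alternating.neg.congr fun m => by ring
  exact hsum.tsum_lt_tsum (i := 0)
    (fun m => (le_abs_self _).trans_eq (by simp [abs_of_nonneg (hf0 m)]))
    (by simpa using neg_lt_self hpos) hfs

end Alternating

theorem existsUnique_mem_Ioo_eq_of_strictMonoOn {α δ : Type*}
    [ConditionallyCompleteLinearOrder α] [DenselyOrdered α] [TopologicalSpace α] [OrderTopology α]
    [LinearOrder δ] [TopologicalSpace δ] [OrderClosedTopology δ] {f : α → δ} {a b : α} {y : δ}
    (hab : a ≤ b) (hc : ContinuousOn f (Icc a b)) (hm : StrictMonoOn f (Ioo a b))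
    (hy : y ∈ Ioo (f a) (f b)) : ∃! r, r ∈ Ioo a b ∧ f r = y := by
  obtain ⟨r, hr, hfr⟩ := intermediate_value_Ioo hab hc hy
  exact ⟨r, ⟨hr, hfr⟩, fun s ⟨hs, hfs⟩ => hm.injOn hs hr (hfs.trans hfr.symm)⟩

noncomputable def bohrCoeff (γ δ lam : ℝ) (m : ℕ) : ℝ :=
  4 * (γ - lam) / ((m : ℝ) ^ 2 * (2 * γ + (δ - γ) * ((m : ℝ) - 1)))

section BohrCoeff

variable {γ δ lam : ℝ} {m : ℕ}

theorem two_mul_le_bohrCoeff_factor (hg : γ ≤ δ) (hm : 1 ≤ m) :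
    2 * γ ≤ 2 * γ + (δ - γ) * ((m : ℝ) - 1) :=
  le_add_of_nonneg_right <| mul_nonneg (sub_nonneg.2 hg) (sub_nonneg.2 (by exact_mod_cast hm))

theorem bohrCoeff_pos (hl : lam < γ) (hγ : 0 < γ) (hg : γ ≤ δ) (hm : 1 ≤ m) :
    0 < bohrCoeff γ δ lam m := by
  have hm' : (0 : ℝ) < m := by exact_mod_cast hm
  have := two_mul_le_bohrCoeff_factor hg hm
  exact div_pos (by linarith) (mul_pos (by positivity) (by linarith))

theorem bohrCoeff_le (hlam : 0 ≤ lam) (hγ : 0 < γ) (hg : γ ≤ δ) (hm : 1 ≤ m) :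
    bohrCoeff γ δ lam m ≤ 2 / (m : ℝ) ^ 2 := by
  have hm' : (0 : ℝ) < m := by exact_mod_cast hm
  have := two_mul_le_bohrCoeff_factor hg hm
  rw [bohrCoeff, div_le_div_iff₀ (mul_pos (by positivity) (by linarith)) (by positivity)]
  nlinarith [sq_nonneg (m : ℝ)]

theorem bohrCoeff_lt_one (hlam : 0 ≤ lam) (hγ : 0 < γ) (hg : γ ≤ δ) (hm : 2 ≤ m) :
    bohrCoeff γ δ lam m < 1 := by
  have hm' : (2 : ℝ) ≤ m := by exact_mod_cast hm
  refine (bohrCoeff_le hlam hγ hg (by omega)).trans_lt ?_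
  rw [div_lt_one (by positivity)]
  nlinarith

theorem antitoneOn_bohrCoeff (hl : lam ≤ γ) (hγ : 0 < γ) (hg : γ ≤ δ) :
    AntitoneOn (bohrCoeff γ δ lam) (Ici 1) := by
  intro i hi j hj hij
  have hi' : (1 : ℝ) ≤ i := by exact_mod_cast hi
  have hij' : (i : ℝ) ≤ j := by exact_mod_cast hij
  have := two_mul_le_bohrCoeff_factor hg hi
  apply div_le_div_of_nonneg_left (by linarith) (by positivity)
  gcongr

theorem summable_bohrCoeff (hlam : 0 ≤ lam) (hl : lam < γ) (hg : γ ≤ δ) :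
    Summable (bohrCoeff γ δ lam) := by
  have hγ : 0 < γ := hlam.trans_lt hl
  have hinv : Summable fun m : ℕ => 2 * (1 / ((m + 1 : ℕ) : ℝ) ^ 2) :=
    ((summable_nat_add_iff 1).2 (summable_one_div_nat_pow.2 one_lt_two)).mul_left 2
  refine (summable_nat_add_iff 1).1 (hinv.of_nonneg_of_le (fun m => ?_) fun m => ?_)
  · exact (bohrCoeff_pos hl hγ hg (by omega)).le
  · exact (bohrCoeff_le hlam hγ hg (by omega)).trans_eq (div_eq_mul_one_div _ _)

theorem summable_bohrCoeff_rpow (hlam : 0 ≤ lam) (hl : lam < γ) (hg : γ ≤ δ) {p : ℝ}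
    (hp : 1 ≤ p) : Summable fun m => bohrCoeff γ δ lam (m + 2) ^ p := by
  have hγ : 0 < γ := hlam.trans_lt hl
  refine ((summable_nat_add_iff 2).2 (summable_bohrCoeff hlam hl hg)).of_nonneg_of_le
    (fun m => rpow_nonneg (bohrCoeff_pos hl hγ hg (by omega)).le p) fun m => ?_
  exact rpow_le_self_of_le_one (bohrCoeff_pos hl hγ hg (by omega)).le
    (bohrCoeff_lt_one hlam hγ hg (by omega)).le hp

end BohrCoeff

theorem improved_bohr_aux_function_unique_root (γ δ lam p : ℝ) (hlam : 0 ≤ lam) (hl : lam < γ)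
    (hg : γ ≤ δ) (hp : 1 ≤ p)
    (c : ℕ → ℝ)
    (hc : ∀ m : ℕ, c m = 4 * (γ - lam) / ((m : ℝ) ^ 2 * (2 * γ + (δ - γ) * ((m : ℝ) - 1))))
    (k₁ : ℝ → ℝ)
    (hk : ∀ r : ℝ, k₁ r =
      r + (∑' m : ℕ, c (m + 2) * r ^ (m + 2))
        + (∑' m : ℕ, (c (m + 2)) ^ p * r ^ (p * ((m : ℝ) + 2)))
        - 1 - ∑' m : ℕ, (-1 : ℝ) ^ (m + 1) * c (m + 2)) :
    ContinuousOn k₁ (Icc 0 1) ∧ StrictMonoOn k₁ (Ioo 0 1) ∧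
      k₁ 0 < 0 ∧ 0 < k₁ 1 ∧ (∃! r : ℝ, r ∈ Ioo (0 : ℝ) 1 ∧ k₁ r = 0) := by
  obtain rfl : c = bohrCoeff γ δ lam := funext hc
  have hγ : 0 < γ := hlam.trans_lt hl
  have hpos (m : ℕ) : 0 < bohrCoeff γ δ lam (m + 2) := bohrCoeff_pos hl hγ hg (by omega)
  have hposp (m : ℕ) : 0 ≤ bohrCoeff γ δ lam (m + 2) ^ p := rpow_nonneg (hpos m).le p
  have hsum := (summable_nat_add_iff 2).2 (summable_bohrCoeff hlam hl hg)
  have hsump := summable_bohrCoeff_rpow hlam hl hg hp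
  have hexp (m : ℕ) : 0 < p * ((m : ℝ) + 2) := by positivity
  have hmono : StrictMonoOn k₁ (Icc 0 1) := fun x hx y hy hxy => by
    have h1 := monotoneOn_tsum_mul_pow (fun m => (hpos m).le) hsum (· + 2) hx hy hxy.le
    have h2 := monotoneOn_tsum_mul_rpow hposp hsump (fun m => (hexp m).le) hx hy hxy.le
    beta_reduce at h1 h2
    rw [hk, hk]
    linarith
  have hcont : ContinuousOn k₁ (Icc 0 1) := by
    have h1 := continuousOn_tsum_mul_pow hsum (· + 2)
    have h2 := continuousOn_tsum_mul_rpow hsump fun m => (hexp m).le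
    rw [show k₁ = _ from funext hk]
    fun_prop
  have h0 : k₁ 0 < 0 := by
    have hanti : Antitone fun m => bohrCoeff γ δ lam (m + 2) := fun i j hij =>
      antitoneOn_bohrCoeff hl.le hγ hg (show 1 ≤ i + 2 by omega) (show 1 ≤ j + 2 by omega)
        (by omega)
    have hS := neg_le_tsum_neg_one_pow_succ_mul hanti hsum
    have hc2 := bohrCoeff_lt_one hlam hγ hg le_rfl
    have hk0 : k₁ 0 = -1 - ∑' m, (-1 : ℝ) ^ (m + 1) * bohrCoeff γ δ lam (m + 2) := by
      simp [hk, (hexp _).ne']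
    linarith
  have h1 : 0 < k₁ 1 := by
    have hS := tsum_neg_one_pow_succ_mul_lt_tsum hsum (fun m => (hpos m).le) (hpos 0)
    have hp0 : 0 ≤ ∑' m, bohrCoeff γ δ lam (m + 2) ^ p := tsum_nonneg hposp
    simp only [hk, one_pow, one_rpow, mul_one]
    linarith
  exact ⟨hcont, hmono.mono Ioo_subset_Icc_self, h0, h1,
    existsUnique_mem_Ioo_eq_of_strictMonoOn zero_le_one hcont
      (hmono.mono Ioo_subset_Icc_self) ⟨h0, h1⟩⟩
end

section
/- The function K₂(r) = −r^2 + Li₂(r) + Li₄(r^2) − π²/12 has a unique root in (0,1), and this root is approximately 0.652442 (in particular it lies in the interval (0.65, 0.66)). -/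
/-!
Splitting off the leading terms `r` and `r ^ 2` of the two series gives
`K₂(r) = r + T₂(r) + T₄(r ^ 2) - π ^ 2 / 12`, where the tails `T_k(z) = ∑_{m ≥ 2} z ^ m / m ^ k`
are nondecreasing on `[0, 1]`, so `K₂` is strictly increasing there. Truncating both series and
bounding the remainders by geometric series gives `K₂(0.65) < 0 < K₂(0.66)`, and the intermediate
value theorem places the root between these two points.
-/

open Real Set

/-- `polylogSeries k z = Li_k(z)`, written with the summation index shifted to start at `0`. -/
noncomputable def polylogSeries (k : ℕ) (z : ℝ) : ℝ :=
  ∑' m : ℕ, z ^ (m + 1) / ((m : ℝ) + 1) ^ k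

noncomputable def K2 (r : ℝ) : ℝ :=
  -r ^ 2 + polylogSeries 2 r + polylogSeries 4 (r ^ 2) - π ^ 2 / 12

section polylogSeries

variable {k : ℕ} {z : ℝ}

lemma summable_one_div_succ_pow (hk : 1 < k) :
    Summable fun m : ℕ => 1 / ((m : ℝ) + 1) ^ k := by
  simpa using (summable_nat_add_iff 1).mpr (Real.summable_one_div_nat_pow.mpr hk)

lemma norm_polylog_term_le (hz : |z| ≤ 1) (m : ℕ) :
    ‖z ^ (m + 1) / ((m : ℝ) + 1) ^ k‖ ≤ 1 / ((m : ℝ) + 1) ^ k := by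
  rw [norm_div, norm_pow, norm_pow, Real.norm_eq_abs, Real.norm_of_nonneg (by positivity)]
  gcongr
  exact pow_le_one₀ (abs_nonneg z) hz

lemma polylog_term_le_pow (hz : 0 ≤ z) (m : ℕ) :
    z ^ (m + 1) / ((m : ℝ) + 1) ^ k ≤ z ^ (m + 1) :=
  div_le_self (by positivity) (one_le_pow₀ (by linarith [m.cast_nonneg (α := ℝ)]))

lemma summable_polylog_of_abs_le_one (hk : 1 < k) (hz : |z| ≤ 1) :
    Summable fun m : ℕ => z ^ (m + 1) / ((m : ℝ) + 1) ^ k :=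
  (summable_one_div_succ_pow hk).of_norm_bounded (norm_polylog_term_le hz)

lemma summable_polylog_of_lt_one (h0 : 0 ≤ z) (h1 : z < 1) :
    Summable fun m : ℕ => z ^ (m + 1) / ((m : ℝ) + 1) ^ k :=
  ((summable_geometric_of_lt_one h0 h1).mul_left z).of_nonneg_of_le (fun _ => by positivity)
    fun m => (polylog_term_le_pow h0 m).trans_eq (pow_succ' z m)

lemma continuousOn_polylogSeries (hk : 1 < k) : ContinuousOn (polylogSeries k) (Icc (-1) 1) :=
  continuousOn_tsum (fun _ => by fun_prop) (summable_one_div_succ_pow hk)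
    fun m _ hz => norm_polylog_term_le (abs_le.mpr hz) m

lemma polylogSeries_eq_add_tsum (hk : 1 < k) (hz : |z| ≤ 1) :
    polylogSeries k z = z + ∑' m : ℕ, z ^ (m + 2) / ((m : ℝ) + 2) ^ k := by
  rw [polylogSeries, (summable_polylog_of_abs_le_one hk hz).tsum_eq_zero_add]
  push_cast
  ring_nf

lemma monotoneOn_polylogSeries_sub_self (hk : 1 < k) :
    MonotoneOn (fun z => polylogSeries k z - z) (Icc 0 1) := by
  intro x ⟨hx0, hx1⟩ y ⟨hy0, hy1⟩ hxy
  have summable_tail {z : ℝ} (h0 : 0 ≤ z) (h1 : z ≤ 1) :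
      Summable fun m : ℕ => z ^ (m + 2) / ((m : ℝ) + 2) ^ k := by
    simpa [add_assoc, one_add_one_eq_two] using (summable_nat_add_iff 1).mpr
      (summable_polylog_of_abs_le_one hk (abs_le.mpr ⟨by linarith, h1⟩))
  simp only [polylogSeries_eq_add_tsum hk (abs_le.mpr ⟨by linarith, hx1⟩),
    polylogSeries_eq_add_tsum hk (abs_le.mpr ⟨by linarith, hy1⟩), add_sub_cancel_left]
  exact (summable_tail hx0 hx1).tsum_le_tsum (fun m => by gcongr) (summable_tail hy0 hy1)

lemma sum_range_le_polylogSeries (h0 : 0 ≤ z) (h1 : z < 1) (N : ℕ) :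
    ∑ m ∈ Finset.range N, z ^ (m + 1) / ((m : ℝ) + 1) ^ k ≤ polylogSeries k z :=
  (summable_polylog_of_lt_one h0 h1).sum_le_tsum _ fun _ _ => by positivity

lemma polylogSeries_le_sum_range_add (h0 : 0 ≤ z) (h1 : z < 1) (N : ℕ) :
    polylogSeries k z ≤
      ∑ m ∈ Finset.range N, z ^ (m + 1) / ((m : ℝ) + 1) ^ k + z ^ (N + 1) / (1 - z) := by
  have hs := summable_polylog_of_lt_one (k := k) h0 h1
  rw [polylogSeries, ← hs.sum_add_tsum_nat_add N]
  gcongr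
  calc ∑' i : ℕ, z ^ (i + N + 1) / ((↑(i + N) : ℝ) + 1) ^ k
      ≤ ∑' i : ℕ, z ^ (N + 1) * z ^ i :=
        ((summable_nat_add_iff N).mpr hs).tsum_le_tsum
          (fun i => (polylog_term_le_pow h0 (i + N)).trans_eq (by ring))
          ((summable_geometric_of_lt_one h0 h1).mul_left _)
    _ = z ^ (N + 1) / (1 - z) := by
        rw [tsum_mul_left, tsum_geometric_of_lt_one h0 h1, div_eq_mul_inv]

end polylogSeries

lemma K2_eq (r : ℝ) : K2 r = r + (polylogSeries 2 r - r) + (polylogSeries 4 (r ^ 2) - r ^ 2)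
    - π ^ 2 / 12 := by
  rw [K2]; ring

lemma strictMonoOn_K2 : StrictMonoOn K2 (Icc 0 1) := by
  intro x hx y hy hxy
  have hsq : MapsTo (· ^ 2 : ℝ → ℝ) (Icc 0 1) (Icc 0 1) := fun r ⟨h0, h1⟩ =>
    ⟨by positivity, pow_le_one₀ h0 h1⟩
  have h2 := monotoneOn_polylogSeries_sub_self (k := 2) (by norm_num) hx hy hxy.le
  have h4 := monotoneOn_polylogSeries_sub_self (k := 4) (by norm_num) (hsq hx) (hsq hy)
    (pow_le_pow_left₀ hx.1 hxy.le 2)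
  rw [K2_eq, K2_eq]
  dsimp only at h2 h4
  linarith

lemma continuousOn_K2 : ContinuousOn K2 (Icc 0 1) := by
  have hsq : MapsTo (· ^ 2 : ℝ → ℝ) (Icc 0 1) (Icc (-1) 1) := fun r ⟨h0, h1⟩ =>
    ⟨by nlinarith, pow_le_one₀ h0 h1⟩
  have h2 := (continuousOn_polylogSeries (k := 2) (by norm_num)).mono
    (Icc_subset_Icc (by norm_num : (-1 : ℝ) ≤ 0) le_rfl)
  have h4 := (continuousOn_polylogSeries (k := 4) (by norm_num)).comp (by fun_prop) hsq
  unfold K2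
  exact ((continuousOn_id.pow 2).neg.add h2 |>.add h4).sub continuousOn_const

lemma K2_065_neg : K2 0.65 < 0 := by
  have hπ : (9.8695877 : ℝ) < π ^ 2 := by nlinarith [pi_gt_d6]
  have h2 := polylogSeries_le_sum_range_add (k := 2) (z := 0.65) (by norm_num) (by norm_num) 24
  have h4 := polylogSeries_le_sum_range_add (k := 4) (z := 0.65 ^ 2) (by norm_num) (by norm_num) 10
  norm_num [Finset.sum_range_succ] at h2 h4
  rw [K2]
  linarith

lemma K2_066_pos : 0 < K2 0.66 := by
  have hπ : π ^ 2 < (9.8696099 : ℝ) := by nlinarith [pi_lt_d6, pi_pos]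
  have h2 := sum_range_le_polylogSeries (k := 2) (z := 0.66) (by norm_num) (by norm_num) 24
  have h4 := sum_range_le_polylogSeries (k := 4) (z := 0.66 ^ 2) (by norm_num) (by norm_num) 10
  norm_num [Finset.sum_range_succ] at h2 h4
  rw [K2]
  linarith

theorem K2_unique_root
    (K₂ : ℝ → ℝ)
    (hK : ∀ r : ℝ, K₂ r =
      -r ^ 2 + (∑' m : ℕ, r ^ (m + 1) / ((m : ℝ) + 1) ^ 2)
        + (∑' m : ℕ, (r ^ 2) ^ (m + 1) / ((m : ℝ) + 1) ^ 4) - π ^ 2 / 12) :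
    (∃! r : ℝ, r ∈ Ioo (0 : ℝ) 1 ∧ K₂ r = 0) ∧
      (∀ r : ℝ, r ∈ Ioo (0 : ℝ) 1 → K₂ r = 0 → r ∈ Ioo (0.65 : ℝ) 0.66) := by
  obtain rfl : K₂ = K2 := funext hK
  obtain ⟨c, hc, hc0⟩ := intermediate_value_Ioo (by norm_num : (0.65 : ℝ) ≤ 0.66)
    (continuousOn_K2.mono (Icc_subset_Icc (by norm_num) (by norm_num)))
    (⟨K2_065_neg, K2_066_pos⟩ : (0 : ℝ) ∈ Ioo (K2 0.65) (K2 0.66))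
  have hc01 : c ∈ Ioo (0 : ℝ) 1 := ⟨by linarith [hc.1], by linarith [hc.2]⟩
  have eq_c {r : ℝ} (hr : r ∈ Ioo (0 : ℝ) 1) (hr0 : K2 r = 0) : r = c :=
    strictMonoOn_K2.injOn (Ioo_subset_Icc_self hr) (Ioo_subset_Icc_self hc01) (hr0.trans hc0.symm)
  exact ⟨⟨c, ⟨hc01, hc0⟩, fun r hr => eq_c hr.1 hr.2⟩, fun r hr hr0 => eq_c hr hr0 ▸ hc⟩
end

section
/- The function K₃(r) = r − 2r^2 + 2·Li₂(r^2) − 4 + (1 − 2/r^2)·log(1 − r^2) − π²/6 + 4·log 2, defined for r ∈ (0,1), is strictly increasing and has a unique root in (0,1), which lies in the interval (0.67, 0.68). -/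
open Real Set

/-!
Expanding `Li₂(x)` and `log (1 - x)` in powers of `x = r²` gives
`K₃(r) = r + ∑_{m ≥ 2} c_m r^{2m} - (2 + π²/6 - 4 log 2)` with
`c_m = 2/m² - 1/m + 2/(m+1) = (m² + m + 2)/(m²(m+1)) ∈ (0, 1]`.
Positivity of the coefficients makes `K₃` strictly increasing on `(0,1)`; truncating the series
after eight terms, with the geometric bound `c_m ≤ 1` on the tail, gives `K₃(0.67) < 0 < K₃(0.68)`,
and the intermediate value theorem locates the root.
-/

lemma StrictMonoOn.existsUnique_eq_zero {f : ℝ → ℝ} {s : Set ℝ} {a b : ℝ} (hf : StrictMonoOn f s)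
    (hab : a ≤ b) (hs : Icc a b ⊆ s) (hc : ContinuousOn f (Icc a b)) (ha : f a < 0) (hb : 0 < f b) :
    (∃! r, r ∈ s ∧ f r = 0) ∧ ∀ r, r ∈ s → f r = 0 → r ∈ Ioo a b := by
  have has : a ∈ s := hs (left_mem_Icc.mpr hab)
  have hbs : b ∈ s := hs (right_mem_Icc.mpr hab)
  have hbetween : ∀ r, r ∈ s → f r = 0 → r ∈ Ioo a b := fun r hr hr0 =>
    ⟨hf.lt_iff_lt has hr |>.mp (hr0 ▸ ha), hf.lt_iff_lt hr hbs |>.mp (hr0 ▸ hb)⟩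
  obtain ⟨r, hr, hr0⟩ := intermediate_value_Ioo hab hc ⟨ha, hb⟩
  exact ⟨⟨r, ⟨hs (Ioo_subset_Icc_self hr), hr0⟩, fun y ⟨hy, hy0⟩ =>
    hf.injOn hy (hs (Ioo_subset_Icc_self hr)) (hy0.trans hr0.symm)⟩, hbetween⟩

noncomputable def dilog (x : ℝ) : ℝ := ∑' m : ℕ, x ^ (m + 1) / ((m : ℝ) + 1) ^ 2

noncomputable def K3 (r : ℝ) : ℝ :=
  r - 2 * r ^ 2 + 2 * dilog (r ^ 2) - 4 + (1 - 2 / r ^ 2) * Real.log (1 - r ^ 2) - π ^ 2 / 6 +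
    4 * Real.log 2

noncomputable def K3coeff (m : ℕ) : ℝ := 2 / (m : ℝ) ^ 2 - 1 / (m : ℝ) + 2 / ((m : ℝ) + 1)

noncomputable def K3series (x : ℝ) : ℝ := ∑' n : ℕ, K3coeff (n + 2) * x ^ (n + 2)

lemma K3coeff_eq {m : ℕ} (hm : m ≠ 0) :
    K3coeff m = ((m : ℝ) ^ 2 + m + 2) / ((m : ℝ) ^ 2 * (m + 1)) := by
  have : (m : ℝ) ≠ 0 := Nat.cast_ne_zero.mpr hm
  unfold K3coeff
  field_simp
  ring

lemma K3coeff_pos {m : ℕ} (hm : m ≠ 0) : 0 < K3coeff m := by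
  rw [K3coeff_eq hm]
  positivity

lemma K3coeff_le_one {m : ℕ} (hm : 2 ≤ m) : K3coeff m ≤ 1 := by
  have hm' : (2 : ℝ) ≤ m := by exact_mod_cast hm
  rw [K3coeff_eq (by omega), div_le_one (by positivity)]
  nlinarith

lemma summable_dilog {x : ℝ} (hx : |x| < 1) :
    Summable fun m : ℕ => x ^ (m + 1) / ((m : ℝ) + 1) ^ 2 := by
  refine Summable.of_norm_bounded ((summable_geometric_of_lt_one (abs_nonneg x) hx).mul_left |x|)
    fun m => ?_
  have h1 : (1 : ℝ) ≤ ((m : ℝ) + 1) ^ 2 := one_le_pow₀ (by simp)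
  rw [norm_div, norm_pow, Real.norm_eq_abs, ← pow_succ']
  simpa using div_le_self (by positivity : 0 ≤ |x| ^ (m + 1)) (h1.trans (le_abs_self _))

lemma norm_K3coeff_mul_pow_le (n : ℕ) (x : ℝ) :
    ‖K3coeff (n + 2) * x ^ (n + 2)‖ ≤ ‖x‖ ^ (n + 2) := by
  rw [norm_mul, norm_pow, Real.norm_of_nonneg (K3coeff_pos (by omega)).le]
  exact mul_le_of_le_one_left (by positivity) (K3coeff_le_one (by omega))

lemma summable_K3series {x : ℝ} (hx : ‖x‖ < 1) :
    Summable fun n : ℕ => K3coeff (n + 2) * x ^ (n + 2) :=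
  Summable.of_norm_bounded ((summable_nat_add_iff 2).mpr
    (summable_geometric_of_lt_one (norm_nonneg x) hx)) (norm_K3coeff_mul_pow_le · x)

lemma hasSum_K3series {x : ℝ} (hx0 : 0 < x) (hx1 : x < 1) :
    HasSum (fun n : ℕ => K3coeff (n + 2) * x ^ (n + 2))
      (2 * dilog x + (1 - 2 / x) * Real.log (1 - x) - 2 - 2 * x) := by
  have habs : |x| < 1 := by rwa [abs_of_pos hx0]
  have hLi := (summable_dilog habs).hasSum.mul_left 2
  have hlog := Real.hasSum_pow_div_log_of_abs_lt_one habs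
  have hlogShift : HasSum (fun n : ℕ => x ^ (n + 2) / ((n : ℝ) + 2)) (-Real.log (1 - x) - x) := by
    have h := (hasSum_nat_add_iff' 1).mpr hlog
    norm_num [add_assoc, one_add_one_eq_two] at h
    exact h
  have hfrom1 : HasSum (fun n : ℕ => K3coeff (n + 1) * x ^ (n + 1))
      (2 * dilog x + (1 - 2 / x) * Real.log (1 - x) - 2) := by
    rw [show 2 * dilog x + (1 - 2 / x) * Real.log (1 - x) - 2
        = 2 * dilog x - -Real.log (1 - x) + 2 / x * (-Real.log (1 - x) - x) by field_simp; ring]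
    refine ((hLi.sub hlog).add (hlogShift.mul_left (2 / x))).congr_fun fun n => ?_
    unfold K3coeff
    push_cast
    field_simp
    ring
  have hc1 : K3coeff 1 = 2 := by norm_num [K3coeff]
  simpa [add_assoc, hc1] using (hasSum_nat_add_iff' 1).mpr hfrom1

lemma monotoneOn_K3series : MonotoneOn K3series (Ico 0 1) := by
  intro x hx y hy hxy
  have hnorm {z : ℝ} (hz : z ∈ Ico 0 1) : ‖z‖ < 1 := by rw [Real.norm_of_nonneg hz.1]; exact hz.2
  refine (summable_K3series (hnorm hx)).tsum_le_tsum (fun n => ?_) (summable_K3series (hnorm hy))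
  gcongr
  · exact (K3coeff_pos (by omega)).le
  · exact hx.1

lemma continuousOn_K3series : ContinuousOn K3series (Metric.ball 0 1) := by
  intro x hx
  rw [mem_ball_zero_iff] at hx
  obtain ⟨a, hxa, ha1⟩ := exists_between hx
  have hcont : ContinuousOn K3series (Metric.closedBall 0 a) :=
    continuousOn_tsum (fun n => by fun_prop) ((summable_nat_add_iff 2).mpr
      (summable_geometric_of_lt_one ((norm_nonneg x).trans hxa.le) ha1))
      fun n y hy => (norm_K3coeff_mul_pow_le n y).trans (pow_le_pow_left₀ (norm_nonneg y)
        (mem_closedBall_zero_iff.mp hy) _)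
  have hnhds : Metric.closedBall 0 a ∈ nhds x :=
    Metric.closedBall_mem_nhds_of_mem (mem_ball_zero_iff.mpr hxa)
  exact (hcont.continuousAt hnhds).continuousWithinAt

lemma K3series_le_sum_add_geometric {x : ℝ} (hx0 : 0 ≤ x) (hx1 : x < 1) (N : ℕ) :
    K3series x ≤ ∑ n ∈ Finset.range N, K3coeff (n + 2) * x ^ (n + 2) + x ^ (N + 2) / (1 - x) := by
  have hs := summable_K3series (x := x) (by rwa [Real.norm_of_nonneg hx0])
  rw [K3series, ← hs.sum_add_tsum_nat_add N]
  gcongr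
  calc ∑' n, K3coeff (n + N + 2) * x ^ (n + N + 2)
      ≤ ∑' n : ℕ, x ^ (N + 2) * x ^ n := by
        refine ((summable_nat_add_iff N).mpr hs).tsum_le_tsum (fun n => ?_)
          ((summable_geometric_of_lt_one hx0 hx1).mul_left _)
        rw [← pow_add, add_comm (N + 2), ← add_assoc]
        exact mul_le_of_le_one_left (pow_nonneg hx0 _) (K3coeff_le_one (by omega))
    _ = x ^ (N + 2) / (1 - x) := by
        rw [tsum_mul_left, tsum_geometric_of_lt_one hx0 hx1, div_eq_mul_inv]

lemma sum_le_K3series {x : ℝ} (hx0 : 0 ≤ x) (hx1 : x < 1) (N : ℕ) :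
    ∑ n ∈ Finset.range N, K3coeff (n + 2) * x ^ (n + 2) ≤ K3series x :=
  (summable_K3series (by rwa [Real.norm_of_nonneg hx0])).sum_le_tsum _
    fun n _ => mul_nonneg (K3coeff_pos (by omega)).le (pow_nonneg hx0 _)

lemma K3_eq_series {r : ℝ} (hr : r ∈ Ioo 0 1) :
    K3 r = r + K3series (r ^ 2) - (2 + π ^ 2 / 6 - 4 * Real.log 2) := by
  have hsq : 0 < r ^ 2 ∧ r ^ 2 < 1 := ⟨by positivity [hr.1], pow_lt_one₀ hr.1.le hr.2 two_ne_zero⟩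
  rw [K3, K3series, (hasSum_K3series hsq.1 hsq.2).tsum_eq]
  ring

lemma strictMonoOn_K3 : StrictMonoOn K3 (Ioo 0 1) := by
  intro r hr s hs hrs
  have hsq {t : ℝ} (ht : t ∈ Ioo 0 1) : t ^ 2 ∈ Ico 0 1 :=
    ⟨sq_nonneg t, pow_lt_one₀ ht.1.le ht.2 two_ne_zero⟩
  have hseries := monotoneOn_K3series (hsq hr) (hsq hs) (pow_le_pow_left₀ hr.1.le hrs.le 2)
  rw [K3_eq_series hr, K3_eq_series hs]
  linarith

lemma continuousOn_K3 : ContinuousOn K3 (Ioo 0 1) := by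
  have hsq : MapsTo (fun r : ℝ => r ^ 2) (Ioo 0 1) (Metric.ball 0 1) := fun r hr => by
    rw [mem_ball_zero_iff, norm_pow, Real.norm_of_nonneg hr.1.le]
    exact pow_lt_one₀ hr.1.le hr.2 two_ne_zero
  refine ContinuousOn.congr (f := fun r => r + K3series (r ^ 2) - (2 + π ^ 2 / 6 - 4 * Real.log 2))
    ?_ fun r hr => K3_eq_series hr
  exact (continuousOn_id.add (continuousOn_K3series.comp (by fun_prop) hsq)).sub continuousOn_const

lemma pi_sq_bounds : 9.8696 < π ^ 2 ∧ π ^ 2 < 9.8697 := by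
  constructor <;> nlinarith [pi_gt_d6, pi_lt_d6]

lemma K3_067_neg : K3 0.67 < 0 := by
  rw [K3_eq_series (by norm_num)]
  have htrunc := K3series_le_sum_add_geometric (x := 0.67 ^ 2) (by norm_num) (by norm_num) 8
  have hval : ∑ n ∈ Finset.range 8, K3coeff (n + 2) * ((0.67 : ℝ) ^ 2) ^ (n + 2)
      + ((0.67 : ℝ) ^ 2) ^ (8 + 2) / (1 - 0.67 ^ 2) < 0.1876 := by
    norm_num [Finset.sum_range_succ, K3coeff]
  linarith [pi_sq_bounds.1, log_two_lt_d9]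

lemma K3_068_pos : 0 < K3 0.68 := by
  rw [K3_eq_series (by norm_num)]
  have htrunc := sum_le_K3series (x := 0.68 ^ 2) (by norm_num) (by norm_num) 8
  have hval : 0.2008 < ∑ n ∈ Finset.range 8, K3coeff (n + 2) * ((0.68 : ℝ) ^ 2) ^ (n + 2) := by
    norm_num [Finset.sum_range_succ, K3coeff]
  linarith [pi_sq_bounds.2, log_two_gt_d9]

theorem K3_strict_mono_unique_root
    (K₃ : ℝ → ℝ)
    (hK : ∀ r : ℝ, K₃ r =
      r - 2 * r ^ 2 + 2 * (∑' m : ℕ, (r ^ 2) ^ (m + 1) / ((m : ℝ) + 1) ^ 2) - 4 +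
        (1 - 2 / r ^ 2) * Real.log (1 - r ^ 2) - π ^ 2 / 6 + 4 * Real.log 2) :
    StrictMonoOn K₃ (Ioo 0 1) ∧ (∃! r : ℝ, r ∈ Ioo (0 : ℝ) 1 ∧ K₃ r = 0) ∧
      (∀ r : ℝ, r ∈ Ioo (0 : ℝ) 1 → K₃ r = 0 → r ∈ Ioo (0.67 : ℝ) 0.68) := by
  obtain rfl : K₃ = K3 := funext hK
  have hsub : Icc (0.67 : ℝ) 0.68 ⊆ Ioo 0 1 := Icc_subset_Ioo (by norm_num) (by norm_num)
  exact ⟨strictMonoOn_K3, strictMonoOn_K3.existsUnique_eq_zero (by norm_num) hsub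
    (continuousOn_K3.mono hsub) K3_067_neg K3_068_pos⟩
end

section
/- Assume for all m ≥ 2 the coefficient bounds |a_m| + |b_m| ≤ c_m with c_m = 4(γ−λ)/(m^2(2γ+(δ−γ)(m−1))) and 0 ≤ λ < γ ≤ δ. Let r_p ∈ (0,1) be the unique root of r + Σ_{m≥2} c_m r^m + Σ_{m≥2} c_m^p r^{pm} = 1 + Σ_{m≥2} (−1)^{m−1} c_m (p ≥ 1 fixed). Then for every r ∈ [0, r_p], r + Σ_{m=2}^∞ (|a_m|+|b_m|) r^m + Σ_{m=2}^∞ (|a_m|+|b_m|)^p r^{pm} ≤ 1 + Σ_{m=2}^∞ (−1)^{m−1} c_m. -/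
/-!
Each term of the left-hand side is increasing in the coefficient and in `r`, so replacing
`|a_m| + |b_m|` by its bound `c_m` and `r` by `r_p` can only increase it; at `r = r_p` the result is
the right-hand side by the defining equation of `r_p`. Summability, which the comparison of the
`tsum`s needs, comes from `c_m ≤ 1` and `r_p < 1`.
-/

open Real Set

noncomputable def bohrSum (p r : ℝ) (u : ℕ → ℝ) : ℝ :=
  r + ∑' m : ℕ, u m * r ^ (m + 2) + ∑' m : ℕ, u m ^ p * r ^ (p * ((m : ℝ) + 2))

section Summability

variable {u : ℕ → ℝ} {C p r : ℝ}

lemma summable_mul_pow_add_two (hu0 : ∀ m, 0 ≤ u m) (huC : ∀ m, u m ≤ C) (hr0 : 0 ≤ r)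
    (hr1 : r < 1) : Summable fun m : ℕ => u m * r ^ (m + 2) := by
  refine .of_nonneg_of_le (fun m => mul_nonneg (hu0 m) (pow_nonneg hr0 _)) (fun m => ?_)
    ((summable_geometric_of_lt_one hr0 hr1).mul_left (C * r ^ 2))
  rw [pow_add, mul_comm (r ^ m), ← mul_assoc]
  gcongr
  exact huC m

lemma rpow_mul_natCast_add_two (hr0 : 0 ≤ r) (m : ℕ) :
    r ^ (p * ((m : ℝ) + 2)) = (r ^ p) ^ (m + 2) := by
  rw [← Real.rpow_mul_natCast hr0]
  push_cast
  rfl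

lemma summable_rpow_mul_rpow_add_two (hp : 0 < p) (hu0 : ∀ m, 0 ≤ u m) (huC : ∀ m, u m ≤ C)
    (hr0 : 0 ≤ r) (hr1 : r < 1) :
    Summable fun m : ℕ => u m ^ p * r ^ (p * ((m : ℝ) + 2)) := by
  simp only [rpow_mul_natCast_add_two hr0]
  exact summable_mul_pow_add_two (C := C ^ p) (fun m => Real.rpow_nonneg (hu0 m) p)
    (fun m => Real.rpow_le_rpow (hu0 m) (huC m) hp.le) (by positivity)
    (Real.rpow_lt_one hr0 hr1 hp)

end Summability

lemma bohrSum_mono {u v : ℕ → ℝ} {C p r s : ℝ} (hp : 0 < p) (hu0 : ∀ m, 0 ≤ u m)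
    (huv : ∀ m, u m ≤ v m) (hvC : ∀ m, v m ≤ C) (hr0 : 0 ≤ r) (hrs : r ≤ s) (hs1 : s < 1) :
    bohrSum p r u ≤ bohrSum p s v := by
  have hv0 : ∀ m, 0 ≤ v m := fun m => (hu0 m).trans (huv m)
  have huC : ∀ m, u m ≤ C := fun m => (huv m).trans (hvC m)
  have hs0 : 0 ≤ s := hr0.trans hrs
  have hr1 : r < 1 := hrs.trans_lt hs1
  unfold bohrSum
  gcongr ?_ + ?_ + ?_
  · exact (summable_mul_pow_add_two hu0 huC hr0 hr1).tsum_le_tsum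
      (fun m => mul_le_mul (huv m) (pow_le_pow_left₀ hr0 hrs _) (pow_nonneg hr0 _) (hv0 m))
      (summable_mul_pow_add_two hv0 hvC hs0 hs1)
  · exact (summable_rpow_mul_rpow_add_two hp hu0 huC hr0 hr1).tsum_le_tsum
      (fun m => mul_le_mul (Real.rpow_le_rpow (hu0 m) (huv m) hp.le)
        (Real.rpow_le_rpow hr0 hrs (by positivity)) (Real.rpow_nonneg hr0 _)
        (Real.rpow_nonneg (hv0 m) p))
      (summable_rpow_mul_rpow_add_two hp hv0 hvC hs0 hs1)

lemma coeff_le_one_of_two_le {γ δ lam x : ℝ} (hlam : 0 ≤ lam) (hl : lam < γ) (hg : γ ≤ δ) (hx : 2 ≤ x) :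
    4 * (γ - lam) / (x ^ 2 * (2 * γ + (δ - γ) * (x - 1))) ≤ 1 := by
  have hγ : 0 < γ := hlam.trans_lt hl
  have hlin : 2 * γ ≤ 2 * γ + (δ - γ) * (x - 1) := by nlinarith
  have hsq : 4 ≤ x ^ 2 := by nlinarith
  rw [div_le_one (by nlinarith)]
  nlinarith [mul_le_mul hsq hlin (by positivity) (by positivity)]

theorem improved_bohr_inequality_general (γ δ lam p : ℝ) (hlam : 0 ≤ lam) (hl : lam < γ)
    (hg : γ ≤ δ) (hp : 1 ≤ p)
    (c : ℕ → ℝ)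
    (hc : ∀ m : ℕ, c m = 4 * (γ - lam) / ((m : ℝ) ^ 2 * (2 * γ + (δ - γ) * ((m : ℝ) - 1))))
    (a b : ℕ → ℝ) (ha : ∀ m, 0 ≤ a m) (hb : ∀ m, 0 ≤ b m)
    (hab : ∀ m : ℕ, 2 ≤ m → a m + b m ≤ c m)
    (rp : ℝ) (hrp : rp ∈ Ioo (0 : ℝ) 1)
    (hroot : rp + (∑' m : ℕ, c (m + 2) * rp ^ (m + 2))
        + (∑' m : ℕ, (c (m + 2)) ^ p * rp ^ (p * ((m : ℝ) + 2)))
      = 1 + ∑' m : ℕ, (-1 : ℝ) ^ (m + 1) * c (m + 2)) :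
    ∀ r ∈ Icc (0 : ℝ) rp,
      r + (∑' m : ℕ, (a (m + 2) + b (m + 2)) * r ^ (m + 2))
          + (∑' m : ℕ, (a (m + 2) + b (m + 2)) ^ p * r ^ (p * ((m : ℝ) + 2)))
        ≤ 1 + ∑' m : ℕ, (-1 : ℝ) ^ (m + 1) * c (m + 2) := by
  rintro r ⟨hr0, hrle⟩
  have hc_le_one : ∀ m : ℕ, c (m + 2) ≤ 1 := fun m => by
    rw [hc]
    exact coeff_le_one_of_two_le hlam hl hg (by push_cast; linarith [m.cast_nonneg (α := ℝ)])
  exact (bohrSum_mono (by linarith) (fun m => add_nonneg (ha _) (hb _))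
    (fun m => hab (m + 2) (by omega)) hc_le_one hr0 hrle hrp.2).trans_eq hroot

theorem improved_bohr_inequality (γ δ lam p : ℝ) (hlam : 0 ≤ lam) (hl : lam < γ)
    (hg : γ ≤ δ) (hp : 1 ≤ p)
    (c : ℕ → ℝ)
    (hc : ∀ m : ℕ, c m = 4 * (γ - lam) / ((m : ℝ) ^ 2 * (2 * γ + (δ - γ) * ((m : ℝ) - 1))))
    (a b : ℕ → ℝ) (ha : ∀ m, 0 ≤ a m) (hb : ∀ m, 0 ≤ b m)
    (hab : ∀ m : ℕ, 2 ≤ m → a m + b m ≤ c m)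
    (rp : ℝ) (hrp : rp ∈ Ioo (0 : ℝ) 1)
    (hroot : rp + (∑' m : ℕ, c (m + 2) * rp ^ (m + 2))
        + (∑' m : ℕ, (c (m + 2)) ^ p * rp ^ (p * ((m : ℝ) + 2)))
      = 1 + ∑' m : ℕ, (-1 : ℝ) ^ (m + 1) * c (m + 2))
    (huniq : ∀ r ∈ Ioo (0 : ℝ) 1,
      (r + (∑' m : ℕ, c (m + 2) * r ^ (m + 2))
          + (∑' m : ℕ, (c (m + 2)) ^ p * r ^ (p * ((m : ℝ) + 2)))
        = 1 + ∑' m : ℕ, (-1 : ℝ) ^ (m + 1) * c (m + 2)) → r = rp) :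
    ∀ r ∈ Icc (0 : ℝ) rp,
      r + (∑' m : ℕ, (a (m + 2) + b (m + 2)) * r ^ (m + 2))
          + (∑' m : ℕ, (a (m + 2) + b (m + 2)) ^ p * r ^ (p * ((m : ℝ) + 2)))
        ≤ 1 + ∑' m : ℕ, (-1 : ℝ) ^ (m + 1) * c (m + 2) :=
  improved_bohr_inequality_general γ δ lam p hlam hl hg hp c hc a b ha hb hab rp hrp hroot
end

section
/- Define G_g(r) = −r + 4·Li₂(r) − 4 + (4 − 4/r)·log(1−r) − 3 − π²/3 + 8·log 2 for r ∈ (0,1). Then G_g is strictly increasing and has a unique root in (0,1), lying in the interval (0.59, 0.60). -/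
/-!
Partial fractions, `1/(n²(n+1)) = 1/n² - 1/n + 1/(n+1)`, together with `∑ rⁿ/n = -log(1-r)`
give `G_g(r) + 3 + π²/3 - 8 log 2 = -r + ∑_{n ≥ 1} 4rⁿ/(n²(n+1))` (`gTerm r n` is the term
of index `n + 1`). The `n = 1` term is `2r`, so `G_g` is `r` plus a series with nonnegative
increasing terms, hence strictly increasing. The root is bracketed by evaluating the series at
`0.59` (five terms plus a geometric bound on the tail) and at `0.60` (five terms), and located by
the intermediate value theorem.
-/

open Real Set

noncomputable def gTerm (r : ℝ) (n : ℕ) : ℝ :=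
  4 * r ^ (n + 1) / (((n : ℝ) + 1) ^ 2 * ((n : ℝ) + 2))

lemma gTerm_nonneg {r : ℝ} (hr : 0 ≤ r) (n : ℕ) : 0 ≤ gTerm r n := by
  unfold gTerm; positivity

lemma gTerm_le_gTerm {a b : ℝ} (ha : 0 ≤ a) (hab : a ≤ b) (n : ℕ) :
    gTerm a n ≤ gTerm b n := by
  unfold gTerm; gcongr

lemma gTerm_zero (r : ℝ) : gTerm r 0 = 2 * r := by
  norm_num [gTerm]; ring

lemma gTerm_le_four_div_sq {r : ℝ} (hr0 : 0 ≤ r) (hr1 : r ≤ 1) (n : ℕ) :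
    gTerm r n ≤ 4 / ((n : ℝ) + 1) ^ 2 :=
  calc gTerm r n ≤ 4 * 1 / (((n : ℝ) + 1) ^ 2 * 1) := by
        unfold gTerm; gcongr
        · exact pow_le_one₀ hr0 hr1
        · linarith
    _ = 4 / ((n : ℝ) + 1) ^ 2 := by ring

lemma summable_four_div_succ_sq : Summable fun n : ℕ => 4 / ((n : ℝ) + 1) ^ 2 := by
  have h : Summable fun n : ℕ => 1 / ((n + 1 : ℕ) : ℝ) ^ 2 :=
    (summable_nat_add_iff 1).mpr (Real.summable_one_div_nat_pow.mpr one_lt_two)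
  simpa [div_eq_mul_inv] using h.mul_left 4

lemma summable_gTerm {r : ℝ} (hr0 : 0 ≤ r) (hr1 : r ≤ 1) : Summable (gTerm r) :=
  summable_four_div_succ_sq.of_nonneg_of_le (gTerm_nonneg hr0) (gTerm_le_four_div_sq hr0 hr1)

lemma continuousOn_tsum_gTerm : ContinuousOn (fun r => ∑' n, gTerm r n) (Icc 0 1) := by
  refine continuousOn_tsum (fun n => ?_) summable_four_div_succ_sq fun n r hr => ?_
  · unfold gTerm; fun_prop
  · rw [Real.norm_of_nonneg (gTerm_nonneg hr.1 n)]
    exact gTerm_le_four_div_sq hr.1 hr.2 n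

lemma gTerm_eq (r : ℝ) (n : ℕ) :
    gTerm r n = 4 * (r ^ (n + 1) / ((n : ℝ) + 1) ^ 2) - 4 * (r ^ (n + 1) / ((n : ℝ) + 1)) +
      4 * (r ^ (n + 1) / ((n : ℝ) + 2)) := by
  unfold gTerm
  field_simp
  ring

lemma summable_pow_succ_div_succ_sq {r : ℝ} (hr : |r| ≤ 1) :
    Summable fun n : ℕ => r ^ (n + 1) / ((n : ℝ) + 1) ^ 2 := by
  refine summable_four_div_succ_sq.of_norm_bounded fun n => ?_
  rw [norm_div, norm_pow, Real.norm_eq_abs, Real.norm_of_nonneg (by positivity)]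
  gcongr
  exact (pow_le_one₀ (abs_nonneg r) hr).trans (by norm_num)

lemma hasSum_pow_succ_div_add_two {r : ℝ} (hr0 : r ≠ 0) (hr1 : |r| < 1) :
    HasSum (fun n : ℕ => r ^ (n + 1) / ((n : ℝ) + 2)) ((-log (1 - r) - r) / r) := by
  have h := ((hasSum_nat_add_iff' 1).mpr (hasSum_pow_div_log_of_abs_lt_one hr1)).div_const r
  refine (by simpa using h : HasSum _ ((-log (1 - r) - r) / r)).congr_fun fun n => ?_
  field_simp
  ring

lemma hasSum_gTerm {r : ℝ} (hr0 : r ≠ 0) (hr1 : |r| < 1) :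
    HasSum (gTerm r)
      (4 * (∑' n : ℕ, r ^ (n + 1) / ((n : ℝ) + 1) ^ 2) - 4 + (4 - 4 / r) * log (1 - r)) := by
  have h := ((((summable_pow_succ_div_succ_sq hr1.le).hasSum.mul_left 4).sub
    ((hasSum_pow_div_log_of_abs_lt_one hr1).mul_left 4)).add
    ((hasSum_pow_succ_div_add_two hr0 hr1).mul_left 4))
  have hval : ∀ S : ℝ, 4 * S - 4 + (4 - 4 / r) * log (1 - r) =
      4 * S - 4 * -log (1 - r) + 4 * ((-log (1 - r) - r) / r) := fun S => by
    field_simp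
    ring
  rw [funext (gTerm_eq r), hval]
  exact h

lemma strictMonoOn_neg_add_tsum_gTerm :
    StrictMonoOn (fun r => -r + ∑' n, gTerm r n) (Icc 0 1) := by
  have hshift : EqOn (fun r => r + ∑' n, gTerm r (n + 1)) (fun r => -r + ∑' n, gTerm r n)
      (Icc 0 1) := fun r hr => by
    simp only [(summable_gTerm hr.1 hr.2).tsum_eq_zero_add, gTerm_zero]
    ring
  refine (strictMonoOn_id.add_monotone fun a ha b hb hab => ?_).congr hshift
  exact Summable.tsum_le_tsum (fun n => gTerm_le_gTerm ha.1 hab (n + 1))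
    ((summable_nat_add_iff 1).mpr (summable_gTerm ha.1 ha.2))
    ((summable_nat_add_iff 1).mpr (summable_gTerm hb.1 hb.2))

lemma gTerm_add_le {r : ℝ} (hr : 0 ≤ r) (N n : ℕ) : gTerm r (n + N) ≤ gTerm r N * r ^ n :=
  calc gTerm r (n + N)
        = 4 * r ^ (N + 1) * r ^ n / (((n : ℝ) + N + 1) ^ 2 * ((n : ℝ) + N + 2)) := by
        unfold gTerm; push_cast; ring
    _ ≤ 4 * r ^ (N + 1) * r ^ n / (((N : ℝ) + 1) ^ 2 * ((N : ℝ) + 2)) := by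
        gcongr <;> linarith [(n.cast_nonneg : (0 : ℝ) ≤ n)]
    _ = gTerm r N * r ^ n := by unfold gTerm; ring

lemma tsum_gTerm_le {r : ℝ} (hr0 : 0 ≤ r) (hr1 : r < 1) (N : ℕ) :
    ∑' n, gTerm r n ≤ ∑ n ∈ Finset.range N, gTerm r n + gTerm r N / (1 - r) := by
  have hsum := summable_gTerm hr0 hr1.le
  rw [← hsum.sum_add_tsum_nat_add N]
  gcongr
  calc ∑' n, gTerm r (n + N) ≤ ∑' n, gTerm r N * r ^ n :=
        Summable.tsum_le_tsum (gTerm_add_le hr0 N) ((summable_nat_add_iff N).mpr hsum)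
          ((summable_geometric_of_lt_one hr0 hr1).mul_left _)
    _ = gTerm r N / (1 - r) := by
        rw [tsum_mul_left, tsum_geometric_of_lt_one hr0 hr1, div_eq_mul_inv]

lemma tsum_gTerm_lt_at_059 : ∑' n, gTerm 0.59 n < 1.3346 := by
  refine (tsum_gTerm_le (by norm_num) (by norm_num) 5).trans_lt ?_
  simp only [gTerm, Finset.sum_range_succ, Finset.sum_range_zero]
  norm_num

lemma lt_tsum_gTerm_at_060 : 1.3448 < ∑' n, gTerm 0.60 n := by
  refine lt_of_lt_of_le ?_ ((summable_gTerm (by norm_num) (by norm_num)).sum_le_tsum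
    (Finset.range 5) fun n _ => gTerm_nonneg (by norm_num) n)
  simp only [gTerm, Finset.sum_range_succ, Finset.sum_range_zero]
  norm_num

lemma three_add_pi_sq_div_three_sub_eight_log_two_mem :
    3 + π ^ 2 / 3 - 8 * log 2 ∈ Ioo 0.7446 0.7448 := by
  have := pi_gt_d6
  have := pi_lt_d6
  have := log_two_gt_d9
  have := log_two_lt_d9
  constructor <;> nlinarith

lemma StrictMonoOn.existsUnique_eq_zero_of_sign_change {f : ℝ → ℝ} {s : Set ℝ} {a b : ℝ}
    (hf : StrictMonoOn f s) (hab : a ≤ b) (hs : Icc a b ⊆ s) (hc : ContinuousOn f (Icc a b))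
    (ha : f a < 0) (hb : 0 < f b) :
    (∃! r, r ∈ s ∧ f r = 0) ∧ ∀ r ∈ s, f r = 0 → r ∈ Ioo a b := by
  obtain ⟨c, hc, hc0⟩ := intermediate_value_Icc hab hc ⟨ha.le, hb.le⟩
  refine ⟨⟨c, ⟨hs hc, hc0⟩, fun r hr => hf.injOn hr.1 (hs hc) (hr.2.trans hc0.symm)⟩,
    fun r hr hr0 => ⟨?_, ?_⟩⟩
  · exact (hf.lt_iff_lt (hs (left_mem_Icc.2 hab)) hr).1 (hr0 ▸ ha)
  · exact (hf.lt_iff_lt hr (hs (right_mem_Icc.2 hab))).1 (hr0 ▸ hb)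

theorem Gg_strict_mono_unique_root
    (Gg : ℝ → ℝ)
    (hG : ∀ r : ℝ, Gg r =
      -r + 4 * (∑' m : ℕ, r ^ (m + 1) / ((m : ℝ) + 1) ^ 2) - 4 +
        (4 - 4 / r) * Real.log (1 - r) - 3 - π ^ 2 / 3 + 8 * Real.log 2) :
    StrictMonoOn Gg (Ioo 0 1) ∧ (∃! r : ℝ, r ∈ Ioo (0 : ℝ) 1 ∧ Gg r = 0) ∧
      (∀ r : ℝ, r ∈ Ioo (0 : ℝ) 1 → Gg r = 0 → r ∈ Ioo (0.59 : ℝ) 0.60) := by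
  have hGg : EqOn (fun r => -r + ∑' n, gTerm r n - (3 + π ^ 2 / 3 - 8 * log 2)) Gg (Ioo 0 1) :=
    fun r hr => by
      dsimp only
      rw [hG, (hasSum_gTerm hr.1.ne' (abs_lt.2 ⟨neg_one_lt_zero.trans hr.1, hr.2⟩)).tsum_eq]
      ring
  have hmono : StrictMonoOn Gg (Ioo 0 1) :=
    ((strictMonoOn_neg_add_tsum_gTerm.mono Ioo_subset_Icc_self).add_const _).congr hGg
  have hsub : Icc (0.59 : ℝ) 0.60 ⊆ Ioo 0 1 := Icc_subset_Ioo (by norm_num) (by norm_num)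
  have hcont : ContinuousOn Gg (Icc 0.59 0.60) :=
    ((continuousOn_neg.add continuousOn_tsum_gTerm).sub continuousOn_const
      |>.mono (hsub.trans Ioo_subset_Icc_self)).congr (hGg.mono hsub).symm
  obtain ⟨hC, hC'⟩ := three_add_pi_sq_div_three_sub_eight_log_two_mem
  have h059 : Gg 0.59 < 0 := by
    rw [← hGg (hsub (left_mem_Icc.2 (by norm_num)))]
    linarith [tsum_gTerm_lt_at_059]
  have h060 : 0 < Gg 0.60 := by
    rw [← hGg (hsub (right_mem_Icc.2 (by norm_num)))]
    linarith [lt_tsum_gTerm_at_060]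
  exact ⟨hmono, hmono.existsUnique_eq_zero_of_sign_change (by norm_num) hsub hcont h059 h060⟩
end
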